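/- arXiv:1512.04510 — 3 statements merged into one kernel-verified Lean document; each statement's English description precedes it below -/
import Mathlib

section
/- For every string x of length n and all natural numbers a, b, c: if (a, b + c) ∈ P_x then (a + b + O(log n), c) ∈ P_x. That is, any model for x can be traded: splitting a model of log-cardinality b+c into 2^b pieces of log-cardinality c yields a model of complexity at most a + b + O(log n) containing x. -/
open scoped Classical

abbrev BinStr := List Bool

/-- A decompressor: a partial computable map (program, condition) ↦ output. -/
def IsDecompressor (D : BinStr → BinStr → Part BinStr) : Prop := Partrec₂ D

/-- Conditional Kolmogorov complexity with respect to decompressor `D`. -/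
noncomputable def Cc (D : BinStr → BinStr → Part BinStr) (x y : BinStr) : ℕ :=
  sInf { n | ∃ p : BinStr, p.length = n ∧ x ∈ D p y }

/-- A decompressor is universal if every decompressor is simulated via a prefix. -/
def IsUniversal (U : BinStr → BinStr → Part BinStr) : Prop :=
  IsDecompressor U ∧ ∀ D, IsDecompressor D → ∃ c : BinStr, ∀ p y, D p y = U (c ++ p) y

/-- Unconditional complexity. -/
noncomputable def C (U : BinStr → BinStr → Part BinStr) (x : BinStr) : ℕ := Cc U x []

/-- The fixed computable encoding of a finite set of strings as a string. -/
def codeSet (A : Finset BinStr) : BinStr := Nat.bits (Encodable.encode A)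

/-- Complexity of a finite set of strings. -/
noncomputable def CSet (U : BinStr → BinStr → Part BinStr) (A : Finset BinStr) : ℕ :=
  C U (codeSet A)

/-- The profile of a string `x`. -/
noncomputable def profile (U : BinStr → BinStr → Part BinStr) (x : BinStr) : Set (ℕ × ℕ) :=
  { ml | ∃ A : Finset BinStr, x ∈ A ∧ CSet U A ≤ ml.1 ∧ Nat.log 2 A.card ≤ ml.2 }

/-- Total conditional complexity `CT(x|y)`: length of a shortest *total* program mapping y to x. -/
noncomputable def CT (U : BinStr → BinStr → Part BinStr) (x y : BinStr) : ℕ :=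
  sInf { n | ∃ p : BinStr, p.length = n ∧ (∀ y' : BinStr, (U p y').Dom) ∧ x ∈ U p y }

/-- The ε-strong profile of `x`. -/
noncomputable def strongProfile (U : BinStr → BinStr → Part BinStr) (ε : ℕ) (x : BinStr) :
    Set (ℕ × ℕ) :=
  { ml | ∃ A : Finset BinStr, x ∈ A ∧ CT U (codeSet A) x ≤ ε ∧
      CSet U A ≤ ml.1 ∧ Nat.log 2 A.card ≤ ml.2 }

/-- `Ω_m`: the number of strings of complexity at most m. -/
noncomputable def Omega (U : BinStr → BinStr → Part BinStr) (m : ℕ) : ℕ :=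
  Set.ncard { x : BinStr | C U x ≤ m }

/-- The Finset of all binary strings of length n. -/
def allStr : ℕ → Finset BinStr
  | 0 => {[]}
  | n + 1 => (allStr n).image (List.cons true) ∪ (allStr n).image (List.cons false)

/-- The cylinder `{ u ++ v : v ∈ {0,1}^m }`. -/
def cyl (u : BinStr) (m : ℕ) : Finset BinStr := (allStr m).image (fun v => u ++ v)

/-!
Sort the model `A` by code, keep only its strings of length `n = |x|`, and cut the resulting
list into consecutive blocks of `2 ^ c'` strings, where `c' = min c n`. There are fewer than
`2 ^ (b + c + 1)` and at most `2 ^ n` of these strings, so `x` lies in a block whose index has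
`b' + 1` bits, `b' = min b n`. The block is computed from a shortest program for `A`, the
self-delimiting header `(n, c', b' + 1)` and the index, hence its complexity is at most
`a + b + O(log n)`. Capping `b` and `c` at `n` keeps the header of size `O(log n)`.
-/

open Encodable

def ofBits (l : BinStr) : ℕ := l.foldr Nat.bit 0

@[simp] theorem ofBits_nil : ofBits [] = 0 := rfl

@[simp] theorem ofBits_cons (b : Bool) (l : BinStr) : ofBits (b :: l) = Nat.bit b (ofBits l) :=
  rfl

@[simp] theorem ofBits_bits (n : ℕ) : ofBits n.bits = n := by
  induction n using Nat.binaryRec' with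
  | zero => simp
  | bit b n h ih => rw [Nat.bits_append_bit n b h, ofBits_cons, ih]

theorem ofBits_append_replicate_false (l : BinStr) (k : ℕ) :
    ofBits (l ++ List.replicate k false) = ofBits l := by
  induction l with
  | nil => induction k <;> simp_all [List.replicate_succ, Nat.bit_val]
  | cons b l ih => simp [ih]

theorem length_bits_le_of_lt_two_pow {n k : ℕ} (h : n < 2 ^ k) : n.bits.length ≤ k := by
  rwa [Nat.size_eq_bits_len, Nat.size_le]

theorem primrec_ofBits : Primrec ofBits :=
  (Primrec.list_foldr Primrec.id (Primrec.const 0)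
    (Primrec.nat_add.comp (Primrec.nat_mul.comp (Primrec.const 2) (Primrec.snd.comp Primrec.snd))
      (Primrec.cond (Primrec.fst.comp Primrec.snd) (Primrec.const 1)
        (Primrec.const 0))).to₂).of_eq
    fun l => by
      induction l with
      | nil => rfl
      | cons b l ih => cases b <;> simp_all [ofBits, Nat.bit_val]

theorem bits_eq_cons {n : ℕ} (hn : n ≠ 0) : n.bits = n.bodd :: n.div2.bits := by
  conv_lhs => rw [← Nat.bit_bodd_div2 n]
  refine Nat.bits_append_bit _ _ fun h => ?_
  by_contra hb
  exact hn (by rw [← Nat.bit_bodd_div2 n, h]; simp_all)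

theorem primrec_bits : Primrec Nat.bits := by
  let step : List BinStr → Option BinStr := fun prev =>
    some (if prev.length = 0 then [] else prev.length.bodd :: prev.getI prev.length.div2)
  have hstep : Primrec₂ fun (_ : Unit) prev => step prev := by
    have hlen : Primrec fun p : Unit × List BinStr => p.2.length :=
      Primrec.list_length.comp Primrec.snd
    refine Primrec.option_some.comp (Primrec.ite (Primrec.eq.comp hlen (Primrec.const 0))
      (Primrec.const []) (Primrec.list_cons.comp (Primrec.nat_bodd.comp hlen)
        (Primrec.list_getI.comp Primrec.snd (Primrec.nat_div2.comp hlen))))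
  refine (Primrec.nat_strong_rec (fun (_ : Unit) n => n.bits) hstep fun _ n => ?_).comp
    (Primrec.const ()) Primrec.id
  rcases eq_or_ne n 0 with rfl | hn
  · simp [step]
  · have hd : n.div2 < n := Nat.binaryRec_decreasing hn
    simp only [step, List.length_map, List.length_range, if_neg hn]
    rw [List.getI_eq_getElem _ (by simpa using hd)]
    simp [bits_eq_cons hn]

def selfDelim (w : BinStr) : BinStr := List.replicate w.length true ++ false :: w

def splitDelim (q : BinStr) : BinStr × BinStr :=
  let r := q.drop (q.idxOf false + 1)
  (r.take (q.idxOf false), r.drop (q.idxOf false))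

theorem length_selfDelim (w : BinStr) : (selfDelim w).length = 2 * w.length + 1 := by
  simp [selfDelim]; ring

@[simp] theorem splitDelim_selfDelim_append (w r : BinStr) :
    splitDelim (selfDelim w ++ r) = (w, r) := by
  have hidx : (selfDelim w ++ r).idxOf false = w.length := by
    simp only [selfDelim, List.append_assoc, List.cons_append]
    induction w.length <;> simp_all [List.replicate_succ]
  have hdrop : (selfDelim w ++ r).drop (w.length + 1) = w ++ r := by
    simp [selfDelim, List.drop_append]
  simp only [splitDelim, hidx, hdrop, List.take_left', List.drop_left']

theorem primrec_splitDelim : Primrec splitDelim := by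
  have hidx : Primrec fun q : BinStr => q.idxOf false :=
    Primrec.list_idxOf.comp (Primrec.const false) Primrec.id
  have hrest : Primrec fun q : BinStr => q.drop (q.idxOf false + 1) :=
    Primrec.list_drop.comp (Primrec.succ.comp hidx) Primrec.id
  exact Primrec.pair (Primrec.list_take.comp hidx hrest) (Primrec.list_drop.comp hidx hrest)

def padBits (m i : ℕ) : BinStr := i.bits ++ List.replicate (m - i.bits.length) false

theorem length_padBits {m i : ℕ} (hi : i < 2 ^ m) : (padBits m i).length = m := by
  have := length_bits_le_of_lt_two_pow hi
  simp [padBits]; omega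

@[simp] theorem ofBits_padBits (m i : ℕ) : ofBits (padBits m i) = i := by
  simp [padBits, ofBits_append_replicate_false]

theorem C_le_length_of_mem {U : BinStr → BinStr → Part BinStr} {x p : BinStr}
    (h : x ∈ U p []) : C U x ≤ p.length :=
  Nat.sInf_le ⟨p, rfl, h⟩

theorem exists_shortest_program {U : BinStr → BinStr → Part BinStr} (hU : IsUniversal U)
    (x : BinStr) : ∃ p, p.length = C U x ∧ x ∈ U p [] := by
  obtain ⟨e, he⟩ := hU.2 (fun p _ => Part.some p) (Computable.fst : Computable Prod.fst)
  have hx : x ∈ U (e ++ x) [] := he x [] ▸ Part.mem_some x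
  exact Nat.sInf_mem (s := {n | ∃ p, p.length = n ∧ x ∈ U p []}) ⟨_, _, rfl, hx⟩

section Advice

variable {α : Type} [Primcodable α]

def adviceProgram (h : α) (m i : ℕ) (p : BinStr) : BinStr :=
  selfDelim (encode (h, m)).bits ++ (padBits m i ++ p)

def adviceDecomp (U : BinStr → BinStr → Part BinStr) (f : α → ℕ → BinStr → BinStr)
    (q _ : BinStr) : Part BinStr :=
  (Part.ofOption (decode (ofBits (splitDelim q).1) : Option (α × ℕ))).bind fun hm =>
    (U (((splitDelim q).2).drop hm.2) []).map (f hm.1 (ofBits (((splitDelim q).2).take hm.2)))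

theorem length_adviceProgram (h : α) {m i : ℕ} (hi : i < 2 ^ m) (p : BinStr) :
    (adviceProgram h m i p).length = 2 * (encode (h, m)).bits.length + 1 + m + p.length := by
  simp [adviceProgram, length_selfDelim, length_padBits hi]; ring

theorem adviceDecomp_adviceProgram (U : BinStr → BinStr → Part BinStr)
    (f : α → ℕ → BinStr → BinStr) (h : α) {m i : ℕ} (hi : i < 2 ^ m) (p y : BinStr) :
    adviceDecomp U f (adviceProgram h m i p) y = (U p []).map (f h i) := by
  simp [adviceDecomp, adviceProgram, List.take_left' (length_padBits hi),
    List.drop_left' (length_padBits hi)]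

theorem isDecompressor_adviceDecomp {U : BinStr → BinStr → Part BinStr} (hU : IsDecompressor U)
    {f : α → ℕ → BinStr → BinStr}
    (hf : Computable fun t : α × ℕ × BinStr => f t.1 t.2.1 t.2.2) :
    IsDecompressor (adviceDecomp U f) := by
  have hrest : Primrec fun t : (BinStr × BinStr) × (α × ℕ) => (splitDelim t.1.1).2 :=
    Primrec.snd.comp (primrec_splitDelim.comp (Primrec.fst.comp Primrec.fst))
  have hheader : Computable fun q : BinStr × BinStr =>
      (decode (ofBits (splitDelim q.1).1) : Option (α × ℕ)) :=
    (Primrec.decode.comp (primrec_ofBits.comp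
      (Primrec.fst.comp (primrec_splitDelim.comp Primrec.fst)))).to_comp
  have hrun : Partrec fun t : (BinStr × BinStr) × (α × ℕ) =>
      U ((splitDelim t.1.1).2.drop t.2.2) [] :=
    Partrec₂.comp (f := U) hU
      (Primrec.list_drop.comp (Primrec.snd.comp Primrec.snd) hrest).to_comp (Computable.const [])
  have hindex : Computable fun t : ((BinStr × BinStr) × (α × ℕ)) × BinStr =>
      ofBits ((splitDelim t.1.1.1).2.take t.1.2.2) :=
    (primrec_ofBits.comp (Primrec.list_take.comp (Primrec.snd.comp Primrec.snd)
      hrest)).to_comp.comp Computable.fst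
  have hargs : Computable fun t : ((BinStr × BinStr) × (α × ℕ)) × BinStr =>
      (t.1.2.1, ofBits ((splitDelim t.1.1.1).2.take t.1.2.2), t.2) :=
    (Computable.fst.comp (Computable.snd.comp Computable.fst)).pair (hindex.pair Computable.snd)
  have hpost := hf.comp hargs
  exact Partrec.bind (Computable.ofOption hheader) (Partrec.map hrun hpost.to₂)

theorem exists_C_le_of_computable {U : BinStr → BinStr → Part BinStr} (hU : IsUniversal U)
    {f : α → ℕ → BinStr → BinStr}
    (hf : Computable fun t : α × ℕ × BinStr => f t.1 t.2.1 t.2.2) :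
    ∃ d, ∀ (h : α) (m i : ℕ) (s : BinStr), i < 2 ^ m →
      C U (f h i s) ≤ C U s + 2 * (encode (h, m)).bits.length + m + d := by
  obtain ⟨u, hu⟩ := hU.2 _ (isDecompressor_adviceDecomp hU.1 hf)
  refine ⟨u.length + 1, fun h m i s hi => ?_⟩
  obtain ⟨p, hp, hps⟩ := exists_shortest_program hU s
  have hrun : f h i s ∈ U (u ++ adviceProgram h m i p) [] := by
    rw [← hu, adviceDecomp_adviceProgram U f h hi]
    exact Part.mem_map _ hps
  have := C_le_length_of_mem hrun
  rw [List.length_append, length_adviceProgram h hi] at this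
  omega

end Advice

/-- Mathlib encodes a finset by the list of its elements sorted by code (`encodeMultiset`). -/
theorem encode_toFinset {α : Type*} [Encodable α] [DecidableEq α] {L : List α}
    (hL : L.Pairwise (fun a b => encode a < encode b)) : encode L.toFinset = encode L := by
  have hnodup : L.Nodup := hL.imp fun h h' => by simp [h'] at h
  change encodeMultiset L.toFinset.val = _
  rw [List.toFinset_val, List.dedup_eq_self.mpr hnodup]
  exact congrArg encode (List.mergeSort_of_pairwise (hL.imp fun h => decide_eq_true h.le))

section SortByCode

variable {α : Type*} [Encodable α]

noncomputable def sortByCode (A : Finset α) : List α :=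
  A.toList.mergeSort fun a b => encode a ≤ encode b

theorem toFinset_sortByCode [DecidableEq α] (A : Finset α) : (sortByCode A).toFinset = A := by
  rw [sortByCode, List.toFinset_eq_of_perm _ _ (List.mergeSort_perm _ _), Finset.toList_toFinset]

theorem length_sortByCode (A : Finset α) : (sortByCode A).length = A.card :=
  (List.mergeSort_perm _ _).length_eq.trans A.length_toList

theorem nodup_sortByCode (A : Finset α) : (sortByCode A).Nodup :=
  (List.mergeSort_perm _ _).nodup_iff.mpr A.nodup_toList

theorem pairwise_sortByCode (A : Finset α) :
    (sortByCode A).Pairwise fun a b => encode a < encode b := by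
  refine (List.pairwise_mergeSort (fun _ _ _ h₁ h₂ => ?_) (fun a b => ?_) _).and
    (nodup_sortByCode A) |>.imp fun ⟨hle, hne⟩ => ?_
  · simp only [decide_eq_true_eq] at h₁ h₂ ⊢; exact h₁.trans h₂
  · simpa using le_total _ _
  · exact (of_decide_eq_true hle).lt_of_ne (encode_injective.ne hne)

theorem encode_sortByCode (A : Finset α) : encode (sortByCode A) = encode A := by
  classical
  rw [← encode_toFinset (pairwise_sortByCode A), toFinset_sortByCode]

end SortByCode

def chunk {β : Type*} (k i : ℕ) (L : List β) : List β := (L.drop (i * k)).take k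

theorem length_chunk_le {β : Type*} (k i : ℕ) (L : List β) : (chunk k i L).length ≤ k :=
  List.length_take_le _ _

theorem chunk_sublist {β : Type*} (k i : ℕ) (L : List β) : (chunk k i L).Sublist L :=
  (List.take_sublist _ _).trans (List.drop_sublist _ _)

theorem exists_mem_chunk {β : Type*} {L : List β} {x : β} (hx : x ∈ L) {k : ℕ} (hk : 0 < k) :
    ∃ i, i * k < L.length ∧ x ∈ chunk k i L := by
  obtain ⟨r, hr, rfl⟩ := List.mem_iff_getElem.mp hx
  have hdecomp : r / k * k + r % k = r := by rw [Nat.mul_comm]; exact Nat.div_add_mod r k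
  have hmod := Nat.mod_lt r hk
  refine ⟨r / k, by omega, List.mem_iff_getElem.mpr ⟨r % k, ?_, ?_⟩⟩
  · simp only [chunk, List.length_take, List.length_drop]; omega
  · simp only [chunk, List.getElem_take, List.getElem_drop]
    congr 1

theorem length_le_two_pow_of_forall_length_eq {M : List BinStr} (hM : M.Nodup) {n : ℕ}
    (hlen : ∀ y ∈ M, y.length = n) : M.length ≤ 2 ^ n := by
  set V := (Finset.univ : Finset (List.Vector Bool n)).image List.Vector.toList
  have hsub : M.toFinset ⊆ V := fun y hy =>
    Finset.mem_image.mpr ⟨⟨y, hlen y (List.mem_toFinset.mp hy)⟩, Finset.mem_univ _, rfl⟩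
  calc M.length = M.toFinset.card := (List.toFinset_card_of_nodup hM).symm
    _ ≤ V.card := Finset.card_le_card hsub
    _ ≤ 2 ^ n := Finset.card_image_le.trans (by simp)

theorem lt_two_pow_of_mul_two_pow_lt {i c m e : ℕ} (h : i * 2 ^ c < 2 ^ m) (he : m ≤ e + c) :
    i < 2 ^ e := by
  refine Nat.lt_of_mul_lt_mul_right (a := 2 ^ c) (h.trans_le ?_)
  rw [← pow_add]; exact Nat.pow_le_pow_right two_pos he

theorem pair_lt_two_pow {a b k : ℕ} (ha : a < 2 ^ k) (hb : b < 2 ^ k) :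
    Nat.pair a b < 2 ^ (2 * k) := by
  calc Nat.pair a b < (max a b + 1) ^ 2 := Nat.pair_lt_max_add_one_sq a b
    _ ≤ (2 ^ k) ^ 2 := Nat.pow_le_pow_left (max_lt ha hb) 2
    _ = 2 ^ (2 * k) := by ring

def lengthChunk (n c i : ℕ) (L : List BinStr) : List BinStr :=
  chunk (2 ^ c) i (L.filter fun y => y.length = n)

def chunkCode (h : ℕ × ℕ) (i : ℕ) (s : BinStr) : BinStr :=
  (encode (lengthChunk h.1 h.2 i ((decode (ofBits s) : Option (List BinStr)).getD []))).bits

theorem primrec_lengthChunk : Primrec fun t : (ℕ × ℕ × ℕ) × List BinStr =>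
    lengthChunk t.1.1 t.1.2.1 t.1.2.2 t.2 := by
  have hpow : Primrec₂ ((· ^ ·) : ℕ → ℕ → ℕ) := Primrec₂.unpaired'.1 Nat.Primrec.pow
  have hfilter : Primrec fun t : (ℕ × ℕ × ℕ) × List BinStr =>
      t.2.filter fun y => y.length = t.1.1 :=
    (PrimrecRel.listFilter (R := fun (y : BinStr) n => y.length = n)
      (Primrec.eq.comp (Primrec.list_length.comp Primrec.fst) Primrec.snd)).comp
      Primrec.snd (Primrec.fst.comp Primrec.fst)
  have hsize : Primrec fun t : (ℕ × ℕ × ℕ) × List BinStr => 2 ^ t.1.2.1 :=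
    hpow.comp (Primrec.const 2) (Primrec.fst.comp (Primrec.snd.comp Primrec.fst))
  exact Primrec.list_take.comp hsize (Primrec.list_drop.comp
    (Primrec.nat_mul.comp (Primrec.snd.comp (Primrec.snd.comp Primrec.fst)) hsize) hfilter)

theorem computable_chunkCode :
    Computable fun t : (ℕ × ℕ) × ℕ × BinStr => chunkCode t.1 t.2.1 t.2.2 := by
  have hdecode : Primrec fun s : BinStr => (decode (ofBits s) : Option (List BinStr)).getD [] :=
    Primrec.option_getD.comp (Primrec.decode.comp primrec_ofBits) (Primrec.const [])
  exact (primrec_bits.comp (Primrec.encode.comp (primrec_lengthChunk.comp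
    (Primrec.pair (Primrec.pair (Primrec.fst.comp Primrec.fst) (Primrec.pair
      (Primrec.snd.comp Primrec.fst) (Primrec.fst.comp Primrec.snd)))
      (hdecode.comp (Primrec.snd.comp Primrec.snd)))))).to_comp

theorem chunkCode_codeSet (A : Finset BinStr) (n c i : ℕ) :
    chunkCode (n, c) i (codeSet A) = codeSet (lengthChunk n c i (sortByCode A)).toFinset := by
  have hsorted : (lengthChunk n c i (sortByCode A)).Pairwise fun a b => encode a < encode b :=
    (pairwise_sortByCode A).sublist ((chunk_sublist _ _ _).trans List.filter_sublist)
  rw [chunkCode, codeSet, codeSet, ofBits_bits, ← encode_sortByCode, encodek, Option.getD_some,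
    encode_toFinset hsorted]

theorem log_card_toFinset_lengthChunk_le (n c i : ℕ) (L : List BinStr) :
    Nat.log 2 (lengthChunk n c i L).toFinset.card ≤ c :=
  calc Nat.log 2 (lengthChunk n c i L).toFinset.card ≤ Nat.log 2 (2 ^ c) :=
        Nat.log_mono_right ((List.toFinset_card_le _).trans (length_chunk_le _ _ _))
    _ = c := Nat.log_pow one_lt_two c

theorem exists_mem_lengthChunk {A : Finset BinStr} {x : BinStr} (hxA : x ∈ A) {b c : ℕ}
    (hA : Nat.log 2 A.card ≤ b + c) :
    ∃ i < 2 ^ (min b x.length + 1),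
      x ∈ lengthChunk x.length (min c x.length) i (sortByCode A) := by
  set M := (sortByCode A).filter fun y => y.length = x.length
  have hxM : x ∈ M := by
    simpa [M, ← List.mem_toFinset, toFinset_sortByCode] using hxA
  have hMA : M.length < 2 ^ (b + c + 1) :=
    calc M.length ≤ A.card := List.length_filter_le _ _ |>.trans (length_sortByCode A).le
      _ < 2 ^ (Nat.log 2 A.card + 1) := Nat.lt_pow_succ_log_self one_lt_two _
      _ ≤ 2 ^ (b + c + 1) := Nat.pow_le_pow_right two_pos (by omega)
  have hMn : M.length ≤ 2 ^ x.length :=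
    length_le_two_pow_of_forall_length_eq ((nodup_sortByCode A).filter _)
      fun y hy => by simpa using (List.mem_filter.mp hy).2
  obtain ⟨i, hi, hx⟩ := exists_mem_chunk hxM (pow_pos two_pos (min c x.length))
  refine ⟨i, lt_two_pow_of_mul_two_pow_lt (m := min (b + c + 1) x.length)
    (c := min c x.length) (e := min b x.length + 1) ?_ (by omega), hx⟩
  rcases le_total (b + c + 1) x.length with h | h
  · rw [min_eq_left h]; omega
  · rw [min_eq_right h]; omega

theorem length_bits_encode_le {a b m k : ℕ} (ha : a < 2 ^ k) (hb : b < 2 ^ k) (hm : m < 2 ^ k) :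
    (encode ((a, b), m)).bits.length ≤ 4 * k := by
  apply length_bits_le_of_lt_two_pow
  have := pair_lt_two_pow (pair_lt_two_pow ha hb)
    (hm.trans_le (Nat.pow_le_pow_right two_pos (by omega)))
  simpa [show 2 * (2 * k) = 4 * k by ring] using this

/-- the profile trade-off: (a, b+c) ∈ P_x implies (a+b+O(log n), c) ∈ P_x. -/
theorem profile_tradeoff
    (U : BinStr → BinStr → Part BinStr) (hU : IsUniversal U) :
    ∃ d : ℕ, ∀ (x : BinStr) (n a b c : ℕ), x.length = n →
      (a, b + c) ∈ profile U x →
      (a + b + d * (Nat.log 2 n + 1), c) ∈ profile U x := by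
  obtain ⟨d, hd⟩ := exists_C_le_of_computable hU computable_chunkCode
  -- the header `(n, c', b' + 1)` costs at most `8 * (log n + 2)` bits, the index `b' + 1`
  refine ⟨d + 17, ?_⟩
  rintro x n a b c rfl ⟨A, hxA, hCA, hcard⟩
  obtain ⟨i, hi, hxi⟩ := exists_mem_lengthChunk hxA hcard
  have hn : x.length < 2 ^ (Nat.log 2 x.length + 1) := Nat.lt_pow_succ_log_self one_lt_two _
  have hheader : (encode ((x.length, min c x.length), min b x.length + 1)).bits.length ≤
      4 * (Nat.log 2 x.length + 2) :=
    length_bits_encode_le (by rw [pow_succ]; omega) (by rw [pow_succ]; omega)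
      (by rw [pow_succ]; omega)
  have hcost := hd (x.length, min c x.length) (min b x.length + 1) i (codeSet A) hi
  rw [chunkCode_codeSet] at hcost
  refine ⟨_, List.mem_toFinset.mpr hxi, ?_,
    (log_card_toFinset_lengthChunk_le _ _ _ _).trans (min_le_left _ _)⟩
  simp only [CSet] at hCA ⊢
  nlinarith [min_le_left b x.length]
end

section
/- For every natural number a, C(Ω_a) = a + O(log a), where Ω_a is the number of strings of complexity at most a. -/
open scoped Classical

/-! Upper bound: shortest programs inject `{x | C x ≤ a}` into the strings of length at most `a`,
so `Ω_a < 2 ^ (a + 1)` has at most `a + 1` bits. Lower bound: given `a` in self-delimiting form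
(`2 log a + O(1)` bits) and a shortest program for `Ω_a`, enumerate the outputs of programs of
length at most `a` until `Ω_a` distinct strings have appeared. They are then all strings of
complexity at most `a`, so the first string not among them has complexity above `a`, whence
`a < C(Ω_a) + 2 log a + O(1)`. -/

namespace OmegaComplexity

open Encodable Filter
open Nat.Partrec (Code)
open Nat.Partrec.Code

/-- The inverse of `Nat.bits` on strings not ending in `false`. -/
def ofBits (l : BinStr) : ℕ := l.foldr Nat.bit 0

@[simp]
lemma ofBits_cons (b : Bool) (l : BinStr) : ofBits (b :: l) = Nat.bit b (ofBits l) := rfl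

@[simp]
lemma ofBits_bits (n : ℕ) : ofBits n.bits = n := by
  induction n using Nat.binaryRec' with
  | zero => rfl
  | bit b n h ih => rw [Nat.bits_append_bit n b h, ofBits_cons, ih]

lemma bits_ofBits_append_true (l : BinStr) : (ofBits (l ++ [true])).bits = l ++ [true] := by
  induction l with
  | nil => rfl
  | cons b l ih =>
    rw [List.cons_append, ofBits_cons, Nat.bits_append_bit _ _ fun h => by simp [h] at ih, ih]

lemma ofBits_lt_two_pow (l : BinStr) : ofBits l < 2 ^ l.length := by
  induction l with
  | nil => simp [ofBits]
  | cons b l ih => cases b <;> simp [Nat.bit, pow_succ] <;> omega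

lemma primrec_ofBits : Primrec ofBits := by
  have hbit : Primrec₂ Nat.bit :=
    (Primrec.cond Primrec.fst (Primrec.succ.comp (Primrec.nat_double.comp Primrec.snd))
      (Primrec.nat_double.comp Primrec.snd)).of_eq fun ⟨b, n⟩ => by cases b <;> rfl
  exact Primrec.list_foldr Primrec.id (Primrec.const 0)
    (hbit.comp (Primrec.fst.comp Primrec.snd) (Primrec.snd.comp Primrec.snd)).to₂

lemma length_bits_le_log_add_one (n : ℕ) : n.bits.length ≤ Nat.log 2 n + 1 := by
  rw [Nat.size_eq_bits_len, Nat.size_le]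
  exact Nat.lt_pow_succ_log_self one_lt_two n

def selfDelimit (w : BinStr) : BinStr := w.flatMap (fun b => [b, b]) ++ [true, false]

lemma length_selfDelimit (w : BinStr) : (selfDelimit w).length = 2 * w.length + 2 := by
  induction w with
  | nil => rfl
  | cons b w ih => simp only [selfDelimit, List.length_append] at ih ⊢; simp; omega

lemma selfDelimit_append_inj {w w' p p' : BinStr}
    (h : selfDelimit w ++ p = selfDelimit w' ++ p') : w = w' ∧ p = p' := by
  induction w generalizing w' with
  | nil => cases w' with
    | nil => simpa [selfDelimit] using h
    | cons b' l' => cases b' <;> simp [selfDelimit] at h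
  | cons b l ih => cases w' with
    | nil => cases b <;> simp [selfDelimit] at h
    | cons b' l' =>
      simp only [selfDelimit, List.flatMap_cons, List.append_assoc, List.cons_append,
        List.nil_append, List.cons.injEq] at h
      obtain ⟨rfl, -, h⟩ := h
      obtain ⟨rfl, rfl⟩ := ih (by simpa [selfDelimit] using h)
      exact ⟨rfl, rfl⟩

lemma primrec_selfDelimit : Primrec selfDelimit :=
  Primrec.list_append.comp
    (Primrec.list_flatMap Primrec.id (Primrec.list_cons.comp Primrec.snd
      (Primrec.list_cons.comp Primrec.snd (Primrec.const []))).to₂)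
    (Primrec.const [true, false])

section ListPrimrec

variable {α : Type*} [Primcodable α] [DecidableEq α]

lemma primrecRel_mem : PrimrecRel fun (a : α) (l : List α) => a ∈ l :=
  (Primrec.nat_lt.comp (Primrec.list_idxOf.comp Primrec.fst Primrec.snd)
    (Primrec.list_length.comp Primrec.snd)).of_eq fun _ => List.idxOf_lt_length_iff

lemma primrec_dedup : Primrec (List.dedup : List α → List α) := by
  have hstep : Primrec₂ fun (_ : List α) (x : α × List α × List α) =>
      if x.1 ∈ x.2.1 then x.2.2 else x.1 :: x.2.2 :=
    (Primrec.ite (primrecRel_mem.comp (Primrec.fst.comp Primrec.snd)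
      (Primrec.fst.comp (Primrec.snd.comp Primrec.snd)))
      (Primrec.snd.comp (Primrec.snd.comp Primrec.snd))
      (Primrec.list_cons.comp (Primrec.fst.comp Primrec.snd)
        (Primrec.snd.comp (Primrec.snd.comp Primrec.snd)))).to₂
  refine (Primrec.list_rec Primrec.id (Primrec.const []) hstep).of_eq fun l => ?_
  induction l with
  | nil => rfl
  | cons x l ih =>
    by_cases hx : x ∈ l
    · simp [hx, List.dedup_cons_of_mem, ← ih]
    · simp [hx, List.dedup_cons_of_notMem, ← ih]

end ListPrimrec

section Complexity

variable {U : BinStr → BinStr → Part BinStr}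

lemma C_le_length_of_mem {x p : BinStr} (h : x ∈ U p []) : C U x ≤ p.length :=
  Nat.sInf_le ⟨p, rfl, h⟩

lemma exists_prefix_forall_mem (hU : IsUniversal U) : ∃ c : BinStr, ∀ x, x ∈ U (c ++ x) [] := by
  obtain ⟨c, hc⟩ := hU.2 (fun p _ => Part.some p) Computable.fst
  exact ⟨c, fun x => hc x [] ▸ Part.mem_some x⟩

lemma exists_length_eq_C (hU : IsUniversal U) (x : BinStr) :
    ∃ p : BinStr, p.length = C U x ∧ x ∈ U p [] := by
  obtain ⟨c, hc⟩ := exists_prefix_forall_mem hU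
  exact Nat.sInf_mem (s := {n | ∃ p : BinStr, p.length = n ∧ x ∈ U p []}) ⟨_, c ++ x, rfl, hc x⟩

/-- The map is `x ↦ ofBits (p ++ [true])` for a shortest program `p` of `x`. -/
lemma exists_injOn_Ico (hU : IsUniversal U) (a : ℕ) :
    ∃ f : BinStr → ℕ, Set.MapsTo f {x | C U x ≤ a} (Finset.Ico 1 (2 ^ (a + 1)) : Set ℕ) ∧
      Set.InjOn f {x | C U x ≤ a} := by
  choose prog hlen hmem using exists_length_eq_C hU
  refine ⟨fun x => ofBits (prog x ++ [true]), fun x hx => ?_, fun x _ y _ hxy => ?_⟩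
  · have hbits := bits_ofBits_append_true (prog x)
    refine Finset.mem_coe.2 (Finset.mem_Ico.2 ⟨Nat.pos_of_ne_zero fun h0 => ?_, ?_⟩)
    · simp [h0] at hbits
    · refine (ofBits_lt_two_pow _).trans_le (Nat.pow_le_pow_right two_pos ?_)
      simpa [hlen] using hx
  · have : prog x = prog y := by
      simpa using (bits_ofBits_append_true (prog x)).symm.trans
        ((congrArg Nat.bits hxy).trans (bits_ofBits_append_true (prog y)))
    exact Part.mem_unique (hmem x) (this ▸ hmem y)

lemma finite_setOf_C_le (hU : IsUniversal U) (a : ℕ) : {x | C U x ≤ a}.Finite :=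
  have ⟨_, hmaps, hinj⟩ := exists_injOn_Ico hU a
  Set.Finite.of_injOn hmaps hinj (Finset.finite_toSet _)

lemma omega_lt_two_pow (hU : IsUniversal U) (a : ℕ) : Omega U a < 2 ^ (a + 1) := by
  obtain ⟨f, hmaps, hinj⟩ := exists_injOn_Ico hU a
  have := Set.ncard_le_ncard_of_injOn f hmaps hinj
  rw [Set.ncard_coe_finset, Nat.card_Ico] at this
  exact Nat.lt_of_le_pred Nat.one_le_two_pow this

lemma C_bits_omega_le (hU : IsUniversal U) : ∃ c, ∀ a, C U (Omega U a).bits ≤ a + c := by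
  obtain ⟨c, hc⟩ := exists_prefix_forall_mem hU
  refine ⟨c.length + 1, fun a => (C_le_length_of_mem (hc _)).trans ?_⟩
  have : (Omega U a).bits.length ≤ a + 1 := by
    rw [Nat.size_eq_bits_len, Nat.size_le]
    exact omega_lt_two_pow hU a
  simp only [List.length_append]
  omega

end Complexity

section Enumeration

variable {U : BinStr → BinStr → Part BinStr} {cU : Code}

/-- `cU` is a code of `U`, in the sense of `Nat.Partrec.Code.exists_code`. -/
def IsCodeOf (cU : Code) (U : BinStr → BinStr → Part BinStr) : Prop :=
  eval cU = fun n =>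
    ((decode n : Option (BinStr × BinStr)) : Part (BinStr × BinStr)).bind fun pq =>
      (U pq.1 pq.2).map encode

lemma exists_isCodeOf (hU : IsDecompressor U) : ∃ cU : Code, IsCodeOf cU U :=
  Nat.Partrec.Code.exists_code.1 hU

/-- `U p []` computed by `cU` with `t` steps of fuel. -/
def evalSteps (cU : Code) (t : ℕ) (p : BinStr) : Option BinStr :=
  (evaln t cU (encode (p, ([] : BinStr)))).bind decode

/-- The outputs of the programs of length at most `a`, among the first `t`, run for `t` steps. -/
def enumUpTo (cU : Code) (a t : ℕ) : List BinStr :=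
  (List.range t).filterMap fun i =>
    (decode i : Option BinStr).bind fun p => if p.length ≤ a then evalSteps cU t p else none

lemma mem_of_evalSteps_eq_some (h : IsCodeOf cU U) {t : ℕ} {p x : BinStr}
    (hx : evalSteps cU t p = some x) : x ∈ U p [] := by
  obtain ⟨e, he, hd⟩ := Option.bind_eq_some_iff.1 hx
  have hev := evaln_sound he
  rw [h] at hev
  simp only [encodek, Part.coe_some, Part.bind_some, Part.mem_map_iff] at hev
  obtain ⟨x', hx', rfl⟩ := hev
  rw [encodek, Option.some_inj] at hd
  exact hd ▸ hx'

lemma eventually_evalSteps_eq_some (h : IsCodeOf cU U) {p x : BinStr} (hx : x ∈ U p []) :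
    ∀ᶠ t in atTop, evalSteps cU t p = some x := by
  have hev : encode x ∈ eval cU (encode (p, ([] : BinStr))) := by
    rw [h]
    simp only [encodek, Part.coe_some, Part.bind_some]
    exact Part.mem_map _ hx
  obtain ⟨t₀, ht₀⟩ := evaln_complete.1 hev
  filter_upwards [eventually_ge_atTop t₀] with t ht
  rw [evalSteps, Option.mem_def.1 (evaln_mono ht ht₀), Option.bind_some, encodek]

lemma C_le_of_mem_enumUpTo (h : IsCodeOf cU U) {a t : ℕ} {x : BinStr}
    (hx : x ∈ enumUpTo cU a t) : C U x ≤ a := by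
  obtain ⟨i, -, hi⟩ := List.mem_filterMap.1 hx
  obtain ⟨p, -, hp⟩ := Option.bind_eq_some_iff.1 hi
  split_ifs at hp with hl
  exact (C_le_length_of_mem (mem_of_evalSteps_eq_some h hp)).trans hl

lemma eventually_mem_enumUpTo (hU : IsUniversal U) (h : IsCodeOf cU U) {a : ℕ} {x : BinStr}
    (hx : C U x ≤ a) : ∀ᶠ t in atTop, x ∈ enumUpTo cU a t := by
  obtain ⟨p, hlen, hp⟩ := exists_length_eq_C hU x
  filter_upwards [eventually_evalSteps_eq_some h hp, eventually_gt_atTop (encode p)] with t ht hpt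
  exact List.mem_filterMap.2 ⟨encode p, List.mem_range.2 hpt, by simp [encodek, hlen ▸ hx, ht]⟩

lemma eventually_setOf_C_le_subset (hU : IsUniversal U) (h : IsCodeOf cU U) (a : ℕ) :
    ∀ᶠ t in atTop, {x | C U x ≤ a} ⊆ {x | x ∈ enumUpTo cU a t} :=
  (eventually_all_finite (finite_setOf_C_le hU a)).2 fun _ hx => eventually_mem_enumUpTo hU h hx

def IsFresh (cU : Code) (a m t : ℕ) (x : BinStr) : Prop :=
  m ≤ (enumUpTo cU a t).dedup.length ∧ x ∉ enumUpTo cU a t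

instance (cU : Code) (a m t : ℕ) (x : BinStr) : Decidable (IsFresh cU a m t x) :=
  inferInstanceAs (Decidable (_ ∧ _))

/-- Once `enumUpTo cU a t` has `Omega U a` distinct elements it has found every string of
complexity at most `a`. -/
lemma lt_C_of_isFresh (hU : IsUniversal U) (h : IsCodeOf cU U) {a t : ℕ} {x : BinStr}
    (hx : IsFresh cU a (Omega U a) t x) : a < C U x := by
  obtain ⟨hcard, hx⟩ := hx
  have hsub : ((enumUpTo cU a t).toFinset : Set BinStr) ⊆ {x | C U x ≤ a} := fun y hy =>
    C_le_of_mem_enumUpTo h (List.mem_toFinset.1 hy)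
  have heq := Set.eq_of_subset_of_ncard_le hsub
    (by rwa [Set.ncard_coe_finset, List.card_toFinset]) (finite_setOf_C_le hU a)
  by_contra hle
  have : x ∈ ((enumUpTo cU a t).toFinset : Set BinStr) := heq ▸ not_lt.1 hle
  exact hx (List.mem_toFinset.1 this)

lemma primrec_evalSteps (cU : Code) : Primrec₂ (evalSteps cU) :=
  Primrec.option_bind
    (primrec_evaln.comp (Primrec.pair (Primrec.pair Primrec.fst (Primrec.const cU))
      (Primrec.encode.comp (Primrec.pair Primrec.snd (Primrec.const [])))))
    (Primrec.decode.comp Primrec.snd).to₂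

lemma primrec_enumUpTo (cU : Code) : Primrec₂ (enumUpTo cU) := by
  have hrun : Primrec fun x : ((ℕ × ℕ) × ℕ) × BinStr =>
      if x.2.length ≤ x.1.1.1 then evalSteps cU x.1.1.2 x.2 else none :=
    Primrec.ite (Primrec.nat_le.comp (Primrec.list_length.comp Primrec.snd)
        (Primrec.fst.comp (Primrec.fst.comp Primrec.fst)))
      ((primrec_evalSteps cU).comp (Primrec.snd.comp (Primrec.fst.comp Primrec.fst)) Primrec.snd)
      (Primrec.const none)
  exact Primrec.listFilterMap (Primrec.list_range.comp Primrec.snd)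
    (Primrec.option_bind (Primrec.decode.comp Primrec.snd) hrun.to₂).to₂

lemma primrecPred_isFresh (cU : Code) :
    PrimrecPred fun y : (ℕ × ℕ) × ℕ × BinStr => IsFresh cU y.1.1 y.1.2 y.2.1 y.2.2 := by
  have henum : Primrec fun y : (ℕ × ℕ) × ℕ × BinStr => enumUpTo cU y.1.1 y.2.1 :=
    (primrec_enumUpTo cU).comp (Primrec.fst.comp Primrec.fst) (Primrec.fst.comp Primrec.snd)
  exact (Primrec.nat_le.comp (Primrec.snd.comp Primrec.fst)
    (Primrec.list_length.comp (primrec_dedup.comp henum))).and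
    (primrecRel_mem.not.comp (Primrec.snd.comp Primrec.snd) henum)

end Enumeration

section FreshDecompressor

variable {U : BinStr → BinStr → Part BinStr} {cU : Code}

/-- On `q = selfDelimit a.bits ++ p` with `p` a program for `(Omega U a).bits`, the accepted
candidates `(_, t, x)` are exactly those with `IsFresh cU a (Omega U a) t x`. -/
def acceptFresh (cU : Code) (q : BinStr) (c : (BinStr × BinStr) × ℕ × BinStr) : Option BinStr :=
  let ⟨(w, p), t, x⟩ := c
  (evalSteps cU t p).bind fun s =>
    if q = selfDelimit w ++ p ∧ IsFresh cU (ofBits w) (ofBits s) t x then some x else none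

def freshDecompressor (cU : Code) : BinStr → BinStr → Part BinStr :=
  fun q _ => Nat.rfindOpt fun n => (decode n).bind (acceptFresh cU q)

lemma primrec_acceptFresh (cU : Code) : Primrec₂ (acceptFresh cU) := by
  let Z := (BinStr × (BinStr × BinStr) × ℕ × BinStr) × BinStr
  have hq : Primrec fun z : Z => z.1.1 := Primrec.fst.comp Primrec.fst
  have hw : Primrec fun z : Z => z.1.2.1.1 :=
    Primrec.fst.comp (Primrec.fst.comp (Primrec.snd.comp Primrec.fst))
  have hp : Primrec fun z : Z => z.1.2.1.2 :=
    Primrec.snd.comp (Primrec.fst.comp (Primrec.snd.comp Primrec.fst))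
  have ht : Primrec fun z : Z => z.1.2.2.1 :=
    Primrec.fst.comp (Primrec.snd.comp (Primrec.snd.comp Primrec.fst))
  have hx : Primrec fun z : Z => z.1.2.2.2 :=
    Primrec.snd.comp (Primrec.snd.comp (Primrec.snd.comp Primrec.fst))
  have hcond : PrimrecPred fun z : Z => z.1.1 = selfDelimit z.1.2.1.1 ++ z.1.2.1.2 ∧
      IsFresh cU (ofBits z.1.2.1.1) (ofBits z.2) z.1.2.2.1 z.1.2.2.2 :=
    (Primrec.eq.comp hq (Primrec.list_append.comp (primrec_selfDelimit.comp hw) hp)).and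
      ((primrecPred_isFresh cU).comp (Primrec.pair
        (Primrec.pair (primrec_ofBits.comp hw) (primrec_ofBits.comp Primrec.snd))
        (Primrec.pair ht hx)))
  have hrun : Primrec fun y : BinStr × (BinStr × BinStr) × ℕ × BinStr =>
      evalSteps cU y.2.2.1 y.2.1.2 :=
    (primrec_evalSteps cU).comp (Primrec.fst.comp (Primrec.snd.comp Primrec.snd))
      (Primrec.snd.comp (Primrec.fst.comp Primrec.snd))
  exact (Primrec.option_bind hrun
    (Primrec.ite hcond (Primrec.option_some.comp hx) (Primrec.const none)).to₂).to₂

lemma isDecompressor_freshDecompressor (cU : Code) : IsDecompressor (freshDecompressor cU) := by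
  have hsearch : Primrec₂ fun (q : BinStr) (n : ℕ) => (decode n).bind (acceptFresh cU q) :=
    Primrec.option_bind (Primrec.decode.comp Primrec.snd)
      ((primrec_acceptFresh cU).comp (Primrec.fst.comp Primrec.fst) Primrec.snd)
  exact (Partrec.rfindOpt hsearch.to_comp).comp Computable.fst

lemma lt_C_of_mem_freshDecompressor (hU : IsUniversal U) (h : IsCodeOf cU U) {a : ℕ}
    {p x y : BinStr} (hp : (Omega U a).bits ∈ U p [])
    (hx : x ∈ freshDecompressor cU (selfDelimit a.bits ++ p) y) : a < C U x := by
  obtain ⟨n, hn⟩ := Nat.rfindOpt_spec hx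
  obtain ⟨⟨⟨w, p'⟩, t, x'⟩, -, hacc⟩ := Option.bind_eq_some_iff.1 hn
  obtain ⟨s, hs, hif⟩ := Option.bind_eq_some_iff.1 hacc
  obtain ⟨⟨hq, hfresh⟩, rfl⟩ : _ ∧ x' = x := by
    simpa only [Option.ite_none_right_eq_some, Option.some_inj] using hif
  obtain ⟨rfl, rfl⟩ := selfDelimit_append_inj hq
  obtain rfl : s = (Omega U a).bits := Part.mem_unique (mem_of_evalSteps_eq_some h hs) hp
  simp only [ofBits_bits] at hfresh
  exact lt_C_of_isFresh hU h hfresh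

lemma freshDecompressor_dom (hU : IsUniversal U) (h : IsCodeOf cU U) {a : ℕ} {p y : BinStr}
    (hp : (Omega U a).bits ∈ U p []) : (freshDecompressor cU (selfDelimit a.bits ++ p) y).Dom := by
  obtain ⟨t, hrun, hsub⟩ :=
    ((eventually_evalSteps_eq_some h hp).and (eventually_setOf_C_le_subset hU h a)).exists
  obtain ⟨x, hx⟩ := (enumUpTo cU a t).finite_toSet.infinite_compl.nonempty
  refine Nat.rfindOpt_dom.2 ⟨encode ((a.bits, p), t, x), x, ?_⟩
  have hcard : Omega U a ≤ (enumUpTo cU a t).dedup.length := by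
    rw [← List.card_toFinset, ← Set.ncard_coe_finset]
    refine Set.ncard_le_ncard (fun z hz => ?_) (Finset.finite_toSet _)
    exact List.mem_toFinset.2 (hsub hz)
  simpa [acceptFresh, encodek, hrun, IsFresh, hcard] using hx

lemma lt_C_bits_omega_add (hU : IsUniversal U) :
    ∃ c, ∀ a, a < C U (Omega U a).bits + 2 * a.bits.length + c := by
  obtain ⟨cU, hcU⟩ := exists_isCodeOf hU.1
  obtain ⟨e, he⟩ := hU.2 _ (isDecompressor_freshDecompressor cU)
  refine ⟨e.length + 2, fun a => ?_⟩
  obtain ⟨p, hlen, hp⟩ := exists_length_eq_C hU (Omega U a).bits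
  obtain ⟨x, hx⟩ := Part.dom_iff_mem.1 (freshDecompressor_dom (y := []) hU hcU hp)
  have hlt := lt_C_of_mem_freshDecompressor hU hcU hp hx
  rw [he] at hx
  have hle := C_le_length_of_mem hx
  simp only [List.length_append, length_selfDelimit] at hle
  omega

end FreshDecompressor

end OmegaComplexity

open OmegaComplexity in
/-- C(Ω_a) = a + O(log a) (both bounds). -/
theorem omega_complexity
    (U : BinStr → BinStr → Part BinStr) (hU : IsUniversal U) :
    ∃ c : ℕ, ∀ a : ℕ,
      C U (Nat.bits (Omega U a)) ≤ a + c * (Nat.log 2 a + 1) ∧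
      a ≤ C U (Nat.bits (Omega U a)) + c * (Nat.log 2 a + 1) := by
  obtain ⟨c₁, hupper⟩ := C_bits_omega_le hU
  obtain ⟨c₂, hlower⟩ := lt_C_bits_omega_add hU
  refine ⟨c₁ + c₂ + 2, fun a => ⟨?_, ?_⟩⟩
  · nlinarith [hupper a]
  · nlinarith [hlower a, length_bits_le_log_add_one a]
end

section
/- For every m and every algorithm p enumerating the strings of complexity at most m, each group S^p_{m,s} (the s-th dyadic block of the enumeration, of size 2^s, corresponding to a 1 in the binary expansion of Ω_m) has complexity C(S^p_{m,s}) ≤ m − s + O(log m + C(p)). -/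
open scoped Classical

/-- `p` (given by code `cd` computing `f`) enumerates `L_m`, the strings of complexity ≤ m:
`f` lists `L_m` without repetition on indices below `Ω_m`. -/
def EnumeratesLm (U : BinStr → BinStr → Part BinStr) (m : ℕ)
    (cd : Nat.Partrec.Code) (f : ℕ → BinStr) : Prop :=
  Set.InjOn f (Set.Iio (Omega U m)) ∧
  (∀ x : BinStr, C U x ≤ m ↔ ∃ i < Omega U m, f i = x) ∧
  (∀ i : ℕ, i < Omega U m → cd.eval i = Part.some (Encodable.encode (f i)))

/-- The dyadic group `S^p_{m,s}`: the block of `2^s` consecutive elements of the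
enumeration corresponding to the digit `2^s` in the binary expansion of `Ω_m`
(the elements with indices in `[⌊Ω_m/2^{s+1}⌋·2^{s+1}, ⌊Ω_m/2^{s+1}⌋·2^{s+1} + 2^s)`). -/
def Sgroup (f : ℕ → BinStr) (Ω s : ℕ) : Finset BinStr :=
  (Finset.Ico (Ω / 2 ^ (s + 1) * 2 ^ (s + 1)) (Ω / 2 ^ (s + 1) * 2 ^ (s + 1) + 2 ^ s)).image f

/-- Complexity of the enumerating algorithm. -/
noncomputable def Cprog (U : BinStr → BinStr → Part BinStr) (cd : Nat.Partrec.Code) : ℕ :=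
  C U (Nat.bits (Encodable.encode cd))


/-!
With `k = ⌊Ω_m / 2^{s+1}⌋`, the group `S^p_{m,s}` is the image under the enumeration of the
indices `[k·2^{s+1}, k·2^{s+1} + 2^s)`. A string of complexity at most `m` has a program of length
at most `m`, so `Ω_m < 2^{m+1}` and `k < 2^{m-s}` has at most `m - s` binary digits. A fixed
decompressor reads a shortest program for `p` and the number `s` in self-delimiting form
(`O(C(p) + log m)` bits) followed by `k` in plain binary, runs `p` on the `2^s` indices of the block
and outputs the code of the resulting set; universality turns this into the bound.
-/

namespace GroupComplexity
open Encodable Denumerable Nat.Partrec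

section Bits

def ofBits (l : List Bool) : ℕ := l.foldr Nat.bit 0

theorem ofBits_bits (n : ℕ) : ofBits n.bits = n := by
  induction n using Nat.binaryRec' with
  | zero => rfl
  | bit b n hb ih => rw [Nat.bits_append_bit n b hb, ofBits, List.foldr_cons, ← ofBits, ih]

theorem bits_eq_bodd_cons {n : ℕ} (hn : n ≠ 0) : n.bits = n.bodd :: (n / 2).bits := by
  conv_lhs => rw [← Nat.bit_bodd_div2 n]
  exact Nat.bits_append_bit _ _ fun h => by
    rw [← Nat.bit_bodd_div2 n, h] at hn
    cases hb : n.bodd <;> simp_all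

def bitsStep (x : ℕ × List Bool) : ℕ × List Bool :=
  (x.1 / 2, if x.1 = 0 then x.2 else x.2 ++ [x.1.bodd])

theorem iterate_bitsStep {t k : ℕ} (hk : k ≤ t) (l : List Bool) :
    (bitsStep^[t] (k, l)).2 = l ++ k.bits := by
  induction t generalizing k l with
  | zero => simp [Nat.le_zero.1 hk]
  | succ t ih =>
    rw [Function.iterate_succ_apply]
    rcases eq_or_ne k 0 with rfl | hk0
    · simpa [bitsStep] using ih (Nat.zero_le t) l
    · rw [bitsStep, if_neg hk0, ih (by omega), bits_eq_bodd_cons hk0]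
      simp

open Primrec in
theorem primrec_bits : Primrec Nat.bits := by
  have hstep : Primrec bitsStep :=
    (nat_div.comp fst (const 2)).pair (Primrec.ite (Primrec.eq.comp fst (const 0)) snd
      (list_concat.comp snd (nat_bodd.comp fst)))
  refine (snd.comp (nat_iterate .id (Primrec.id.pair (const [])) (hstep.comp snd).to₂)).of_eq
    fun n => ?_
  simpa using iterate_bitsStep le_rfl []

open Primrec in
theorem primrec_ofBits : Primrec ofBits :=
  list_foldr .id (const 0) (Primrec.cond (fst.comp snd) (nat_double_succ.comp (snd.comp snd))
    (nat_double.comp (snd.comp snd))).to₂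

end Bits

open Primrec in
theorem primrec_pow : Primrec₂ ((· ^ ·) : ℕ → ℕ → ℕ) :=
  (nat_iterate snd (const 1) (nat_mul.comp (fst.comp fst) snd).to₂).to₂.of_eq fun a n => by
    induction n with
    | zero => rfl
    | succ n ih => rw [Function.iterate_succ_apply', ih, pow_succ, mul_comm]

section SelfDelimiting

def selfDelimit (x : BinStr) : BinStr := List.replicate x.length true ++ false :: x

def splitDelimited (p : BinStr) : BinStr × BinStr :=
  let n := (p.takeWhile id).length
  ((p.drop (n + 1)).take n, (p.drop (n + 1)).drop n)

@[simp] theorem length_selfDelimit (x : BinStr) :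
    (selfDelimit x).length = 2 * x.length + 1 := by
  simp [selfDelimit]
  omega

@[simp] theorem splitDelimited_selfDelimit_append (x y : BinStr) :
    splitDelimited (selfDelimit x ++ y) = (x, y) := by
  have hrun : ((selfDelimit x ++ y).takeWhile id).length = x.length := by
    simp [selfDelimit]
  have hdrop : (selfDelimit x ++ y).drop (x.length + 1) = x ++ y := by
    simp [selfDelimit, List.drop_append]
  simp [splitDelimited, hrun, hdrop]

open Primrec in
theorem primrec_splitDelimited : Primrec splitDelimited := by
  have hn : Primrec fun p : BinStr => (p.takeWhile id).length :=
    list_length.comp (list_takeWhile .id)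
  have hr : Primrec fun p : BinStr => p.drop ((p.takeWhile id).length + 1) :=
    list_drop.comp (Primrec.succ.comp hn) .id
  exact (list_take.comp hn hr).pair (list_drop.comp hn hr)

/-- `k` comes last and undelimited, so it costs only its `Nat.size` bits. -/
def encodeTriple (q : BinStr) (s k : ℕ) : BinStr :=
  selfDelimit q ++ (selfDelimit s.bits ++ k.bits)

def decodeTriple (p : BinStr) : BinStr × ℕ × ℕ :=
  ((splitDelimited p).1, ofBits (splitDelimited (splitDelimited p).2).1,
    ofBits (splitDelimited (splitDelimited p).2).2)

@[simp] theorem decodeTriple_encodeTriple (q : BinStr) (s k : ℕ) :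
    decodeTriple (encodeTriple q s k) = (q, s, k) := by
  simp [decodeTriple, encodeTriple, ofBits_bits]

theorem length_encodeTriple (q : BinStr) (s k : ℕ) :
    (encodeTriple q s k).length = 2 * q.length + 2 * s.size + k.size + 2 := by
  simp [encodeTriple, Nat.size_eq_bits_len]
  ring

open Primrec in
theorem primrec_decodeTriple : Primrec decodeTriple := by
  have h := primrec_splitDelimited
  have h' := h.comp (snd.comp h)
  exact (fst.comp h).pair
    ((primrec_ofBits.comp (fst.comp h')).pair (primrec_ofBits.comp (snd.comp h')))

end SelfDelimiting

section SortByEncode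

def encodeLE (x y : BinStr) : Prop := encode x ≤ encode y

instance : DecidableRel encodeLE := fun x y => Nat.decLe (encode x) (encode y)
instance : IsTrans BinStr encodeLE := ⟨fun _ _ _ => Nat.le_trans⟩
instance : Std.Antisymm encodeLE := ⟨fun _ _ h h' => encode_injective (Nat.le_antisymm h h')⟩
instance : Std.Total encodeLE := ⟨fun _ _ => Nat.le_total _ _⟩

theorem encode_toFinset {l : List BinStr} (hl : l.Nodup) :
    encode l.toFinset = encode (l.insertionSort encodeLE) := by
  -- `Finset.encodable` encodes a finset as the list of its elements sorted by their codes
  change encode (l.toFinset.val.sort encodeLE) = _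
  rw [List.toFinset_val, List.dedup_eq_self.2 hl, Multiset.coe_sort,
    List.mergeSort_eq_insertionSort]

open Primrec in
theorem primrec_orderedInsert : Primrec₂ (List.orderedInsert encodeLE) := by
  let step (a : BinStr × List BinStr) (x : BinStr × List BinStr × List BinStr) : List BinStr :=
    if encode a.1 ≤ encode x.1 then a.1 :: x.1 :: x.2.1 else x.1 :: x.2.2
  have hstep : Primrec₂ step :=
    Primrec.ite
      (nat_le.comp (Primrec.encode.comp (fst.comp fst)) (Primrec.encode.comp (fst.comp snd)))
      (list_cons.comp (fst.comp fst) (list_cons.comp (fst.comp snd) (fst.comp (snd.comp snd))))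
      (list_cons.comp (fst.comp snd) (snd.comp (snd.comp snd)))
  refine Primrec₂.of_eq (list_rec snd (list_cons.comp fst (const [])) hstep).to₂ fun a l => ?_
  induction l with
  | nil => rfl
  | cons y ys ih => rw [List.orderedInsert, ← ih]; rfl

open Primrec in
theorem primrec_insertionSort : Primrec (List.insertionSort encodeLE) :=
  list_foldr .id (const []) (primrec_orderedInsert.comp (fst.comp snd) (snd.comp snd)).to₂

end SortByEncode

section Block

def evalBlock (c : Code) (a n : ℕ) : Part (List ℕ) :=
  n.rec (Part.some []) fun i IH => IH.bind fun l => (c.eval (a + i)).map (l ++ [·])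

theorem evalBlock_eq {c : Code} {a n : ℕ} {e : ℕ → ℕ}
    (he : ∀ i, a ≤ i → i < a + n → c.eval i = Part.some (e i)) :
    evalBlock c a n = Part.some ((List.range' a n).map e) := by
  induction n with
  | zero => rfl
  | succ n ih =>
    simp only [evalBlock] at ih ⊢
    rw [ih fun i h1 h2 => he i h1 (by omega), he (a + n) (by omega) (by omega),
      List.range'_concat, List.map_append]
    simp

open Primrec in
theorem partrec_evalBlock : Partrec fun x : Code × ℕ × ℕ => evalBlock x.1 x.2.1 x.2.2 :=
  Partrec.nat_rec (Computable.snd.comp .snd) (Partrec.const' (Part.some []))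
    ((Code.eval_part.comp (Computable.fst.comp .fst)
      (nat_add.comp (fst.comp (snd.comp fst)) (fst.comp snd)).to_comp).map
      (list_concat.comp (snd.comp (snd.comp fst)) snd).to_comp.to₂).to₂

def codeSetOfBlock (c : Code) (a n : ℕ) : Part BinStr :=
  (evalBlock c a n).map fun vs =>
    (encode ((vs.map fun v => (decode v).getD []).insertionSort encodeLE)).bits

theorem codeSet_image_Ico_mem_codeSetOfBlock {c : Code} {f : ℕ → BinStr} {a n : ℕ}
    (hinj : Set.InjOn f (Set.Ico a (a + n)))
    (hc : ∀ i, a ≤ i → i < a + n → c.eval i = Part.some (encode (f i))) :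
    codeSet ((Finset.Ico a (a + n)).image f) ∈ codeSetOfBlock c a n := by
  have hnodup : ((List.range' a n).map f).Nodup :=
    (List.nodup_range').map_on fun i hi j hj => hinj (by simpa using hi) (by simpa using hj)
  have himage : ((List.range' a n).map f).toFinset = (Finset.Ico a (a + n)).image f := by
    ext
    simp [and_assoc]
  rw [codeSetOfBlock, evalBlock_eq hc, Part.map_some, List.map_map]
  simp only [Function.comp_def, encodek, Option.getD_some]
  rw [codeSet, ← himage, encode_toFinset hnodup]
  exact Part.mem_some _

open Primrec in
theorem partrec_codeSetOfBlock :
    Partrec fun x : Code × ℕ × ℕ => codeSetOfBlock x.1 x.2.1 x.2.2 := by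
  have hdecode : Primrec fun v : ℕ => (decode v).getD ([] : BinStr) :=
    option_getD.comp Primrec.decode (const [])
  have hout : Primrec fun vs : List ℕ =>
      (encode ((vs.map fun v => (decode v).getD []).insertionSort encodeLE)).bits :=
    primrec_bits.comp (Primrec.encode.comp (primrec_insertionSort.comp
      (list_map .id (hdecode.comp snd).to₂)))
  exact partrec_evalBlock.map (hout.comp snd).to_comp.to₂

end Block

def blockDecompressor (U : BinStr → BinStr → Part BinStr) (p _ : BinStr) : Part BinStr :=
  (U (decodeTriple p).1 []).bind fun w =>
    codeSetOfBlock (ofNat Code (ofBits w))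
      ((decodeTriple p).2.2 * 2 ^ ((decodeTriple p).2.1 + 1)) (2 ^ (decodeTriple p).2.1)

open Primrec in
theorem isDecompressor_blockDecompressor {U : BinStr → BinStr → Part BinStr}
    (hU : IsDecompressor U) : IsDecompressor (blockDecompressor U) := by
  have hs : Primrec fun x : (BinStr × BinStr) × BinStr => (decodeTriple x.1.1).2.1 :=
    fst.comp (snd.comp (primrec_decodeTriple.comp (fst.comp fst)))
  have hk : Primrec fun x : (BinStr × BinStr) × BinStr => (decodeTriple x.1.1).2.2 :=
    snd.comp (snd.comp (primrec_decodeTriple.comp (fst.comp fst)))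
  have hblock : Primrec fun x : (BinStr × BinStr) × BinStr =>
      (ofNat Code (ofBits x.2), (decodeTriple x.1.1).2.2 * 2 ^ ((decodeTriple x.1.1).2.1 + 1),
        2 ^ (decodeTriple x.1.1).2.1) :=
    ((Primrec.ofNat Code).comp (primrec_ofBits.comp snd)).pair
      ((nat_mul.comp hk (primrec_pow.comp (const 2) (Primrec.succ.comp hs))).pair
        (primrec_pow.comp (const 2) hs))
  exact (hU.comp (fst.comp (primrec_decodeTriple.comp fst)).to_comp (.const [])).bind
    (partrec_codeSetOfBlock.comp hblock.to_comp).to₂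

theorem mem_blockDecompressor {U : BinStr → BinStr → Part BinStr} {q x : BinStr} {c : Code}
    {s k : ℕ} (hq : (encode c).bits ∈ U q [])
    (hx : x ∈ codeSetOfBlock c (k * 2 ^ (s + 1)) (2 ^ s)) (y : BinStr) :
    x ∈ blockDecompressor U (encodeTriple q s k) y := by
  rw [blockDecompressor, decodeTriple_encodeTriple]
  exact Part.mem_bind_iff.2 ⟨_, hq, by rwa [ofBits_bits, ofNat_encode]⟩

section Complexity

variable {U : BinStr → BinStr → Part BinStr}

theorem C_le_length {p x : BinStr} (h : x ∈ U p []) : C U x ≤ p.length :=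
  Nat.sInf_le ⟨p, rfl, h⟩

theorem exists_C_le_length_add (hU : IsUniversal U) {D : BinStr → BinStr → Part BinStr}
    (hD : IsDecompressor D) : ∃ c, ∀ p x, x ∈ D p [] → C U x ≤ p.length + c := by
  obtain ⟨w, hw⟩ := hU.2 D hD
  refine ⟨w.length, fun p x h => ?_⟩
  rw [hw] at h
  simpa [add_comm] using C_le_length h

theorem exists_program_length_eq_C (hU : IsUniversal U) (x : BinStr) :
    ∃ p, p.length = C U x ∧ x ∈ U p [] := by
  obtain ⟨w, hw⟩ := hU.2 (fun p _ => Part.some p) Computable.fst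
  have hne : {n | ∃ p, p.length = n ∧ x ∈ U p []}.Nonempty :=
    ⟨_, w ++ x, rfl, by rw [← hw]; exact Part.mem_some x⟩
  exact Nat.sInf_mem hne

theorem mem_allStr {n : ℕ} {l : BinStr} : l ∈ allStr n ↔ l.length = n := by
  induction n generalizing l with
  | zero => simp [allStr]
  | succ n ih =>
    cases l with
    | nil => simp [allStr]
    | cons b l => cases b <;> simp [allStr, ih]

theorem card_allStr : ∀ n, (allStr n).card = 2 ^ n
  | 0 => rfl
  | n + 1 => by
    rw [allStr, Finset.card_union_of_disjoint (by simp [Finset.disjoint_left]),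
      Finset.card_image_of_injective _ List.cons_injective,
      Finset.card_image_of_injective _ List.cons_injective, card_allStr n, pow_succ, mul_two]

theorem Omega_lt_two_pow (hU : IsUniversal U) (m : ℕ) : Omega U m < 2 ^ (m + 1) := by
  choose g hg using exists_program_length_eq_C hU
  have hinj : Set.InjOn g {x | C U x ≤ m} := fun x _ y _ h =>
    Part.mem_unique (hg x).2 (h ▸ (hg y).2)
  have hmaps : Set.MapsTo g {x | C U x ≤ m} ((Finset.range (m + 1)).biUnion allStr) :=
    fun x hx => by simpa [mem_allStr, (hg x).1, Nat.lt_succ_iff] using hx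
  calc Omega U m ≤ ((Finset.range (m + 1)).biUnion allStr).card := by
        rw [Omega, ← Set.ncard_coe_finset]
        exact Set.ncard_le_ncard_of_injOn g hmaps hinj (Finset.finite_toSet _)
    _ ≤ ∑ n ∈ Finset.range (m + 1), 2 ^ n := by
        simpa only [card_allStr] using
          Finset.card_biUnion_le (s := Finset.range (m + 1)) (t := allStr)
    _ < 2 ^ (m + 1) := Nat.geomSum_lt le_rfl (by simp)

end Complexity

theorem div_mul_add_two_pow_le_of_testBit {n s : ℕ} (h : n.testBit s = true) :
    n / 2 ^ (s + 1) * 2 ^ (s + 1) + 2 ^ s ≤ n := by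
  have hmod : 2 ^ s ≤ n % 2 ^ (s + 1) :=
    Nat.ge_two_pow_of_testBit (by simp [Nat.testBit_mod_two_pow, h])
  have := Nat.div_add_mod n (2 ^ (s + 1))
  rw [mul_comm] at this
  omega

theorem div_two_pow_lt {n m s : ℕ} (hn : n < 2 ^ (m + 1)) (hs : s ≤ m) :
    n / 2 ^ (s + 1) < 2 ^ (m - s) := by
  rw [Nat.div_lt_iff_lt_mul (by positivity), ← pow_add]
  convert hn using 2
  omega

end GroupComplexity

open GroupComplexity Encodable in
/-- C(S^p_{m,s}) ≤ m − s + O(log m + C(p)). -/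
theorem group_complexity
    (U : BinStr → BinStr → Part BinStr) (hU : IsUniversal U) :
    ∃ c : ℕ, ∀ (m s : ℕ) (cd : Nat.Partrec.Code) (f : ℕ → BinStr),
      EnumeratesLm U m cd f →
      Nat.testBit (Omega U m) s = true →
      CSet U (Sgroup f (Omega U m) s) ≤
        (m - s) + c * (Nat.log 2 m + 1 + Cprog U cd) := by
  obtain ⟨c, hc⟩ := exists_C_le_length_add hU (isDecompressor_blockDecompressor hU.1)
  refine ⟨c + 4, fun m s cd f hf hs => ?_⟩
  set Ω := Omega U m
  set k := Ω / 2 ^ (s + 1)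
  obtain ⟨q, hq, hqU⟩ := exists_program_length_eq_C hU (encode cd).bits
  have hΩ : Ω < 2 ^ (m + 1) := Omega_lt_two_pow hU m
  have hblock : k * 2 ^ (s + 1) + 2 ^ s ≤ Ω := div_mul_add_two_pow_le_of_testBit hs
  have hsm : s ≤ m := by
    have := (Nat.ge_two_pow_of_testBit hs).trans_lt hΩ
    rw [Nat.pow_lt_pow_iff_right (by norm_num)] at this
    omega
  have hmem : codeSet (Sgroup f Ω s) ∈ blockDecompressor U (encodeTriple q s k) [] :=
    mem_blockDecompressor hqU (codeSet_image_Ico_mem_codeSetOfBlock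
      (hf.1.mono fun i hi => by simp only [Set.mem_Ico, Set.mem_Iio] at hi ⊢; omega)
      (fun i _ hi => hf.2.2 i (by omega))) []
  have hsize_s : s.size ≤ Nat.log 2 m + 1 :=
    Nat.size_le.2 (hsm.trans_lt (Nat.lt_pow_succ_log_self one_lt_two m))
  have hsize_k : k.size ≤ m - s := Nat.size_le.2 (div_two_pow_lt hΩ hsm)
  calc CSet U (Sgroup f Ω s) ≤ (encodeTriple q s k).length + c := hc _ _ hmem
    _ = 2 * Cprog U cd + 2 * s.size + k.size + 2 + c := by rw [length_encodeTriple, hq]; rfl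
    _ ≤ (m - s) + (c + 4) * (Nat.log 2 m + 1 + Cprog U cd) := by nlinarith
end
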